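/- arXiv:1810.06987 — 6 statements merged into one kernel-verified Lean document; each statement's English description precedes it below -/
import Mathlib

section
/- The number of partitions of a positive integer n ≥ 4 in which every part is at least 3 equals p(n) - p(n-1) - p(n-2) + p(n-3), where p denotes the partition counting function. -/
/-! Let `c_k(n)` count the partitions of `n` with all parts `≥ k`. Such a partition either has all
parts `≥ k + 1` or contains a part `k`, and removing one part `k` matches the latter with the
partitions of `n - k` with all parts `≥ k`. Hence `c_{k+1}(n) = c_k(n) - c_k(n - k)`, and
applying this for `k = 1, 2` starting from `c_1 = p` gives
`c_3(n) = (p(n) - p(n-1)) - (p(n-2) - p(n-3))`. -/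

/-- The partition counting function `p`. -/
def partitionCount (n : ℕ) : ℕ := Fintype.card (Nat.Partition n)

theorem card_subtype_add_card_subtype_and_not {α : Type*} [Fintype α] (p q : α → Prop)
    [DecidablePred p] [DecidablePred q] :
    Fintype.card {x // p x ∧ q x} + Fintype.card {x // p x ∧ ¬ q x} =
      Fintype.card {x // p x} := by
  simp only [Fintype.card_subtype, ← Finset.filter_filter]
  exact Finset.card_filter_add_card_filter_not _

namespace Nat.Partition

def partitionWithPartRestrictedEquiv {n a : ℕ} (ha1 : 1 ≤ a) (ha : a ≤ n) {p : ℕ → Prop}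
    (hpa : p a) :
    {P : n.Partition // a ∈ P.parts ∧ ∀ i ∈ P.parts, p i} ≃
      {Q : (n - a).Partition // ∀ i ∈ Q.parts, p i} :=
  (Equiv.subtypeSubtypeEquivSubtypeInter _ _).symm.trans <|
    (partitionWithPartEquiv ha1 ha).subtypeEquiv fun P => by
      rw [partitionWithPartEquiv_apply_parts, ← Multiset.cons_erase P.2,
        Multiset.forall_mem_cons, Multiset.erase_cons_head]
      exact and_iff_right hpa

theorem card_parts_ge_succ_add_card_parts_ge_sub {n k : ℕ} (hk : 1 ≤ k) (hkn : k ≤ n) :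
    Fintype.card {P : n.Partition // ∀ i ∈ P.parts, k + 1 ≤ i} +
        Fintype.card {Q : (n - k).Partition // ∀ i ∈ Q.parts, k ≤ i} =
      Fintype.card {P : n.Partition // ∀ i ∈ P.parts, k ≤ i} := by
  have hsucc : ∀ P : n.Partition,
      (∀ i ∈ P.parts, k + 1 ≤ i) ↔ (∀ i ∈ P.parts, k ≤ i) ∧ k ∉ P.parts := fun P =>
    ⟨fun h => ⟨fun i hi => Nat.le_of_succ_le (h i hi), fun hk => Nat.not_succ_le_self k (h k hk)⟩,
      fun ⟨h, hk⟩ i hi => (h i hi).lt_of_ne (by rintro rfl; exact hk hi)⟩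
  rw [← card_subtype_add_card_subtype_and_not (fun P : n.Partition => ∀ i ∈ P.parts, k ≤ i)
    (k ∈ ·.parts), add_comm, Fintype.card_congr (Equiv.subtypeEquivRight hsucc)]
  congr 1
  refine (Fintype.card_congr (partitionWithPartRestrictedEquiv hk hkn le_rfl).symm).trans ?_
  exact Fintype.card_congr (Equiv.subtypeEquivRight fun _ => and_comm)

theorem card_parts_ge_one (n : ℕ) :
    Fintype.card {P : n.Partition // ∀ i ∈ P.parts, 1 ≤ i} = partitionCount n :=
  Fintype.card_congr (Equiv.subtypeUnivEquiv fun P _ => P.parts_pos)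

end Nat.Partition

theorem stmt_3 (n : ℕ) (hn : 4 ≤ n) :
    (Fintype.card {P : Nat.Partition n // ∀ i ∈ P.parts, 3 ≤ i} : ℤ) =
      (partitionCount n : ℤ) - (partitionCount (n - 1) : ℤ)
        - (partitionCount (n - 2) : ℤ) + (partitionCount (n - 3) : ℤ) := by
  have h3 := Nat.Partition.card_parts_ge_succ_add_card_parts_ge_sub
    (n := n) (k := 2) (by norm_num) (by omega)
  have h2 := Nat.Partition.card_parts_ge_succ_add_card_parts_ge_sub
    (n := n) (k := 1) le_rfl (by omega)
  have h2' := Nat.Partition.card_parts_ge_succ_add_card_parts_ge_sub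
    (n := n - 2) (k := 1) le_rfl (by omega)
  rw [show n - 2 - 1 = n - 3 by omega] at h2'
  simp only [Nat.reduceAdd, Nat.Partition.card_parts_ge_one] at h3 h2 h2'
  omega
end

section
/- Let Δ be the second-order differential operator on R = Q[Q_1, Q_2, ...] given by 2Δ = Σ_{k,ℓ≥0} (C(k+ℓ, k) Q_{k+ℓ} - Q_k Q_ℓ) ∂²/∂Q_{k+1}∂Q_{ℓ+1} - Σ_{k≥0} Q_k ∂/∂Q_{k+2} (with Q_0 = 1). Then for every f in the polynomial subring Q[Q_1, Q_2] and every g in R, one has Δ(fg) = Δ(f)·g + (∂f/∂Q_2)·(E g - Q_1 ∂g) + f·Δ(g), where E is the weight operator and ∂ is the derivation with ∂Q_1 = 1, ∂Q_k = Q_{k-1}. -/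
open MvPolynomial

/-- The Bloch–Okounkov ring `R = ℚ[Q₁, Q₂, Q₃, …]`, with `Q k = X k` for `k : ℕ+`. -/
noncomputable abbrev BO : Type := MvPolynomial ℕ+ ℚ

/-- The index `k + 1` as an element of `ℕ+`. -/
def v (k : ℕ) : ℕ+ := ⟨k + 1, Nat.succ_pos k⟩

/-- `Q_k` for `k : ℕ`, with the convention `Q₀ = 1`. -/
noncomputable def Qv (k : ℕ) : BO := if h : 0 < k then X ⟨k, h⟩ else 1

/-- The derivation `∂` determined by `∂Q₁ = 1` and `∂Q_k = Q_{k-1}` for `k ≥ 2`. -/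
noncomputable def del : Derivation ℚ BO BO :=
  mkDerivation ℚ (fun k => if k = 1 then 1 else X (k - 1))

/-- The weight operator `E`, the derivation with `E(Q_k) = k · Q_k`. -/
noncomputable def wt : Derivation ℚ BO BO :=
  mkDerivation ℚ (fun k => ((k : ℕ) : ℚ) • X k)

/-- The operator `Δ`, defined by
`2Δ = Σ_{k,ℓ≥0} (C(k+ℓ,k) Q_{k+ℓ} - Q_k Q_ℓ) ∂²/∂Q_{k+1}∂Q_{ℓ+1} - Σ_{k≥0} Q_k ∂/∂Q_{k+2}`,
with `Q₀ := 1`. -/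
noncomputable def Del (f : BO) : BO :=
  (1 / 2 : ℚ) •
    ((∑ᶠ p : ℕ × ℕ,
        ((((p.1 + p.2).choose p.1 : ℚ) • Qv (p.1 + p.2)) - Qv p.1 * Qv p.2) *
          pderiv (v p.1) (pderiv (v p.2) f))
      - ∑ᶠ k : ℕ, Qv k * pderiv (v (k + 1)) f)

open Function

/-! `2Δ` is a second-order operator `Σ c_{kℓ} ∂²/∂Q_{k+1}∂Q_{ℓ+1}` with symmetric
coefficients `c_{kℓ} = C(k+ℓ,k) Q_{k+ℓ} - Q_k Q_ℓ` minus a first-order one, so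
`Δ(fg) - Δ(f) g - f Δ(g) = Σ c_{kℓ} (∂f/∂Q_{k+1}) (∂g/∂Q_{ℓ+1})`.
For `f ∈ ℚ[Q₁, Q₂]` only `k ≤ 1` contributes, and `c_{0ℓ} = 0`, so this is `∂f/∂Q₂`
times `Σ_ℓ c_{1ℓ} ∂g/∂Q_{ℓ+1}`. Since `c_{1ℓ} = (ℓ+1) Q_{ℓ+1} - Q₁ Q_ℓ = (E - Q₁∂)(Q_{ℓ+1})`,
the last sum is the derivation `E - Q₁∂` applied to `g`. -/

namespace MvPolynomial

variable {σ ι R : Type*} [CommSemiring R]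

@[fun_prop]
lemma hasFiniteSupport_pderiv (f : MvPolynomial σ R) : HasFiniteSupport fun i => pderiv i f :=
  f.vars.finite_toSet.subset fun _ hi => by_contra fun h => hi (pderiv_eq_zero_of_notMem_vars h)

lemma pderiv_comm (i j : σ) (f : MvPolynomial σ R) :
    pderiv i (pderiv j f) = pderiv j (pderiv i f) := by
  classical
  induction f using MvPolynomial.induction_on with
  | C a => simp
  | add p q hp hq => simp [hp, hq]
  | mul_X p n ih =>
    have hX : ∀ k l : σ, pderiv k (pderiv l (X n : MvPolynomial σ R)) = 0 := fun k l => by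
      simp [pderiv_X, Pi.single_apply, apply_ite]
    simp only [pderiv_mul, map_add, hX, ih]
    ring

lemma pderiv_eq_zero_of_mem_supported {s : Set σ} {f : MvPolynomial σ R}
    (hf : f ∈ supported R s) {i : σ} (hi : i ∉ s) : pderiv i f = 0 :=
  pderiv_eq_zero_of_notMem_vars fun h => hi (mem_supported.mp hf h)

lemma finsum_pderiv_mul_apply_X (D : Derivation R (MvPolynomial σ R) (MvPolynomial σ R))
    (f : MvPolynomial σ R) : ∑ᶠ i, pderiv i f * D (X i) = D f := by
  classical
  induction f using MvPolynomial.induction_on with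
  | C a => simp [derivation_C]
  | add p q hp hq =>
    simp only [map_add, add_mul]
    rw [finsum_add_distrib (by fun_prop) (by fun_prop), hp, hq]
  | mul_X p n ih =>
    have hn : ∀ i, i ≠ n → p * pderiv i (X n) * D (X i) = 0 := fun i hi => by
      rw [pderiv_X_of_ne hi.symm, mul_zero, zero_mul]
    simp only [pderiv_mul, add_mul, D.leibniz, smul_eq_mul]
    rw [finsum_add_distrib (by fun_prop) ((Set.finite_singleton n).subset fun i hi =>
        by_contra fun h => hi (hn i h)), finsum_eq_single _ n hn, pderiv_X_self,
      ← ih, mul_finsum' _ _ (by fun_prop), mul_one, add_comm]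
    exact congrArg _ (finsum_congr fun i => by ring)

lemma hasFiniteSupport_pderiv_mul_pderiv {e : ι → σ} (he : Injective e)
    (f g : MvPolynomial σ R) :
    HasFiniteSupport fun p : ι × ι => pderiv (e p.1) f * pderiv (e p.2) g :=
  (((hasFiniteSupport_pderiv f).comp_of_injective he).prod
    ((hasFiniteSupport_pderiv g).comp_of_injective he)).subset
    fun _ hp => ⟨left_ne_zero_of_mul hp, right_ne_zero_of_mul hp⟩

lemma hasFiniteSupport_pderiv_pderiv {e : ι → σ} (he : Injective e) (f : MvPolynomial σ R) :
    HasFiniteSupport fun p : ι × ι => pderiv (e p.1) (pderiv (e p.2) f) :=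
  (((hasFiniteSupport_pderiv f).comp_of_injective he).prod
    ((hasFiniteSupport_pderiv f).comp_of_injective he)).subset fun p hp =>
    ⟨fun h => hp (by simp only [comp_apply] at h ⊢; rw [pderiv_comm, h, map_zero]),
      fun h => hp (by simp only [comp_apply] at h ⊢; rw [h, map_zero])⟩

lemma finsum_mul_pderiv_mul {e : ι → σ} (he : Injective e) (a : ι → MvPolynomial σ R)
    (f g : MvPolynomial σ R) :
    ∑ᶠ i, a i * pderiv (e i) (f * g) =
      (∑ᶠ i, a i * pderiv (e i) f) * g + f * ∑ᶠ i, a i * pderiv (e i) g := by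
  rw [finsum_mul' _ _ (by fun_prop (disch := exact he)),
    mul_finsum' _ _ (by fun_prop (disch := exact he)),
    ← finsum_add_distrib (by fun_prop (disch := exact he)) (by fun_prop (disch := exact he))]
  exact finsum_congr fun i => by rw [pderiv_mul]; ring

lemma finsum_mul_pderiv_pderiv_mul {e : ι → σ} (he : Injective e)
    (c : ι × ι → MvPolynomial σ R) (hc : ∀ p, c p.swap = c p) (f g : MvPolynomial σ R) :
    ∑ᶠ p, c p * pderiv (e p.1) (pderiv (e p.2) (f * g)) =
      (∑ᶠ p, c p * pderiv (e p.1) (pderiv (e p.2) f)) * g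
        + 2 * ∑ᶠ p, c p * (pderiv (e p.1) f * pderiv (e p.2) g)
        + f * ∑ᶠ p, c p * pderiv (e p.1) (pderiv (e p.2) g) := by
  have hswap : ∑ᶠ p, c p * (pderiv (e p.1) g * pderiv (e p.2) f) =
      ∑ᶠ p, c p * (pderiv (e p.1) f * pderiv (e p.2) g) := by
    rw [← finsum_comp_equiv (Equiv.prodComm ι ι)]
    exact finsum_congr fun p => by simp [hc, mul_comm]
  have hf := (hasFiniteSupport_pderiv_pderiv he f).fun_mul_right c
  have hg := (hasFiniteSupport_pderiv_pderiv he g).fun_mul_right c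
  have hfg := (hasFiniteSupport_pderiv_mul_pderiv he f g).fun_mul_right c
  have hgf := (hasFiniteSupport_pderiv_mul_pderiv he g f).fun_mul_right c
  rw [two_mul]
  nth_rw 1 [← hswap]
  rw [finsum_mul' _ _ hf, mul_finsum' _ _ hg, ← finsum_add_distrib hgf hfg,
    ← finsum_add_distrib (hf.fun_mul_left fun _ => g) (hgf.fun_add hfg),
    ← finsum_add_distrib ((hf.fun_mul_left fun _ => g).fun_add (hgf.fun_add hfg))
      (hg.fun_mul_right fun _ => f)]
  exact finsum_congr fun p => by rw [pderiv_mul, map_add, pderiv_mul, pderiv_mul]; ring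

end MvPolynomial

lemma v_injective : Injective v := fun _ _ h => by simpa [v] using congrArg PNat.val h

noncomputable def delCoeff (p : ℕ × ℕ) : BO :=
  ((p.1 + p.2).choose p.1 : ℚ) • Qv (p.1 + p.2) - Qv p.1 * Qv p.2

lemma delCoeff_swap (p : ℕ × ℕ) : delCoeff p.swap = delCoeff p := by
  rw [delCoeff, delCoeff, Prod.fst_swap, Prod.snd_swap, add_comm, Nat.choose_symm_add, mul_comm]

lemma delCoeff_zero_left (l : ℕ) : delCoeff (0, l) = 0 := by
  simp [delCoeff, Qv]

lemma Qv_succ (l : ℕ) : Qv (l + 1) = X (v l) := dif_pos l.succ_pos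

lemma wt_X_v (l : ℕ) : wt (X (v l)) = ((l + 1 : ℕ) : ℚ) • X (v l) := mkDerivation_X ℚ _ _

lemma del_X_v (l : ℕ) : del (X (v l)) = Qv l := by
  rw [del, mkDerivation_X]
  cases l with
  | zero => rfl
  | succ m => rw [Qv_succ, if_neg fun h => by simpa [v] using congrArg PNat.val h]; rfl

lemma wt_sub_X_smul_del_X (l : ℕ) :
    (wt - (X (v 0) : BO) • del) (X (v l)) = delCoeff (1, l) := by
  rw [Derivation.coe_sub, Pi.sub_apply, Derivation.smul_apply, wt_X_v, del_X_v, delCoeff,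
    add_comm 1 l, Nat.choose_one_right, Qv_succ, ← Qv_succ 0, smul_eq_mul]

lemma Del_eq (f : BO) : Del f = (1 / 2 : ℚ) •
    ((∑ᶠ p : ℕ × ℕ, delCoeff p * pderiv (v p.1) (pderiv (v p.2) f))
      - ∑ᶠ k : ℕ, Qv k * pderiv (v (k + 1)) f) := rfl

lemma Del_mul (f g : BO) : Del (f * g) = Del f * g + f * Del g
    + ∑ᶠ p : ℕ × ℕ, delCoeff p * (pderiv (v p.1) f * pderiv (v p.2) g) := by
  have half : (C (1 / 2 : ℚ) : BO) * 2 = 1 := by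
    rw [← map_ofNat C 2, ← C_mul]; norm_num
  rw [Del_eq, Del_eq, Del_eq, finsum_mul_pderiv_pderiv_mul v_injective delCoeff delCoeff_swap,
    finsum_mul_pderiv_mul (e := fun k => v (k + 1)) (v_injective.comp (add_left_injective 1))]
  simp only [smul_eq_C_mul]
  linear_combination
    (∑ᶠ p : ℕ × ℕ, delCoeff p * (pderiv (v p.1) f * pderiv (v p.2) g)) * half

lemma finsum_delCoeff_one_mul_pderiv (g : BO) :
    ∑ᶠ l : ℕ, delCoeff (1, l) * pderiv (v l) g = wt g - X (v 0) * del g := by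
  rw [← smul_eq_mul (X (v 0)), ← Derivation.smul_apply, ← Derivation.sub_apply,
    ← finsum_pderiv_mul_apply_X, ← finsum_comp_equiv Equiv.pnatEquivNat.symm]
  exact finsum_congr fun l => by rw [mul_comm, ← wt_sub_X_smul_del_X]; rfl

lemma finsum_delCoeff_mul_pderiv_mul_pderiv_of_mem_supported {f : BO}
    (hf : f ∈ supported ℚ {v 0, v 1}) (g : BO) :
    ∑ᶠ p : ℕ × ℕ, delCoeff p * (pderiv (v p.1) f * pderiv (v p.2) g) =
      pderiv (v 1) f * (wt g - X (v 0) * del g) := by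
  rw [finsum_curry _ ((hasFiniteSupport_pderiv_mul_pderiv v_injective f g).fun_mul_right _),
    finsum_eq_single _ 1, ← finsum_delCoeff_one_mul_pderiv, mul_finsum]
  · exact finsum_congr fun l => by ring
  intro k hk
  refine finsum_eq_zero_of_forall_eq_zero fun l => ?_
  match k, hk with
  | 0, _ => rw [delCoeff_zero_left, zero_mul]
  | m + 2, _ =>
    rw [pderiv_eq_zero_of_mem_supported hf (by simp [v_injective.eq_iff]), zero_mul, mul_zero]

theorem stmt_9 (f g : BO) (hf : f ∈ Algebra.adjoin ℚ ({X (v 0), X (v 1)} : Set BO)) :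
    Del (f * g) =
      Del f * g + pderiv (v 1) f * (wt g - X (v 0) * del g) + f * Del g := by
  rw [← Set.image_pair, ← supported_eq_adjoin_X] at hf
  rw [Del_mul, finsum_delCoeff_mul_pderiv_mul_pderiv_of_mem_supported hf]
  ring
end

section
/- The operators D = q d/dq, 𝔡 = 12 ∂/∂P, and W (the weight operator) on the ring of quasimodular forms M̃ = Q[P, Q, R] form an sl_2-triple: [W, D] = 2D, [W, 𝔡] = -2𝔡, and [𝔡, D] = W. -/
open MvPolynomial

/-- The ring of quasimodular forms `M̃ = ℚ[P, Q, R]`, with `P = X 0`, `Q = X 1`, `R = X 2`. -/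
noncomputable abbrev QM : Type := MvPolynomial (Fin 3) ℚ

/-- The derivation `D = q d/dq`, acting via the Ramanujan identities
`D(P) = (P²-Q)/12`, `D(Q) = (PQ-R)/3`, `D(R) = (PR-Q²)/2`. -/
noncomputable def Dop : Derivation ℚ QM QM :=
  mkDerivation ℚ ![(1 / 12 : ℚ) • (X 0 ^ 2 - X 1), (1 / 3 : ℚ) • (X 0 * X 1 - X 2),
    (1 / 2 : ℚ) • (X 0 * X 2 - X 1 ^ 2)]

/-- The operator `𝔡 = 12 ∂/∂P`. -/
noncomputable def dop (f : QM) : QM := (12 : ℚ) • pderiv (0 : Fin 3) f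

/-- The weight operator `W`, the derivation multiplying a weight-homogeneous element of
weight `k` by `k`, where `P, Q, R` have weights `2, 4, 6`. -/
noncomputable def Wop : Derivation ℚ QM QM :=
  mkDerivation ℚ ![(2 : ℚ) • X 0, (4 : ℚ) • X 1, (6 : ℚ) • X 2]

/-! The commutator of two derivations is again a derivation, and a derivation of `ℚ[P, Q, R]`
is determined by its values on `P, Q, R`; so each relation is a finite check on the
generators. Viewing `𝔡` as a derivation puts all three relations in that form. -/

noncomputable def dopDerivation : Derivation ℚ QM QM := (12 : ℚ) • pderiv (0 : Fin 3)

@[simp]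
lemma dopDerivation_apply (f : QM) : dopDerivation f = dop f := rfl

lemma commutator_Wop_Dop : ⁅Wop, Dop⁆ = 2 • Dop := by
  refine derivation_ext fun i => MvPolynomial.funext fun x => ?_
  fin_cases i <;> simp [Derivation.commutator_apply, Wop, Dop, mkDerivation_X, smul_eval] <;> ring

lemma commutator_Wop_dopDerivation : ⁅Wop, dopDerivation⁆ = -(2 • dopDerivation) := by
  refine derivation_ext fun i => MvPolynomial.funext fun x => ?_
  fin_cases i <;>
    simp [Derivation.commutator_apply, Wop, dopDerivation, mkDerivation_X, pderiv_X, smul_eval]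
  ring

lemma commutator_dopDerivation_Dop : ⁅dopDerivation, Dop⁆ = Wop := by
  refine derivation_ext fun i => MvPolynomial.funext fun x => ?_
  fin_cases i <;>
    simp [Derivation.commutator_apply, dopDerivation, Dop, Wop, mkDerivation_X, pderiv_X,
      smul_eval] <;> ring

theorem stmt_13 :
    (∀ f : QM, Wop (Dop f) - Dop (Wop f) = 2 • Dop f)
    ∧ (∀ f : QM, Wop (dop f) - dop (Wop f) = -(2 • dop f))
    ∧ (∀ f : QM, dop (Dop f) - Dop (dop f) = Wop f) := by
  refine ⟨fun f => ?_, fun f => ?_, fun f => ?_⟩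
  · simpa [Derivation.commutator_apply] using congr($commutator_Wop_Dop f)
  · simpa [Derivation.commutator_apply] using congr($commutator_Wop_dopDerivation f)
  · simpa [Derivation.commutator_apply] using congr($commutator_dopDerivation_Dop f)
end

section
/- Let D be the derivation on Q[P, Q, R] with D(P) = (P²-Q)/12, D(Q) = (PQ-R)/3, D(R) = (PR-Q²)/2, and let D̂ = D - (1/24)P (where P denotes multiplication by P). Then for nonnegative integers a, b, c, the coefficient of P^{a+1}Q^bR^c in D̂(P^aQ^bR^c) equals a/12 + b/3 + c/2 - 1/24, which is nonzero; consequently, if f ∈ Q[P,Q,R] has degree exactly r as a polynomial in P, then D̂f has degree exactly r+1 in P. -/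
open MvPolynomial

/-- The operator `D̂ = D - (1/24)P`. -/
noncomputable def Dhat (f : QM) : QM := Dop f - (1 / 24 : ℚ) • (X 0 * f)

/-!
Write `D̂ = P · E - L`, where `E = (P ∂_P + 4 Q ∂_Q + 6 R ∂_R) / 12 - 1/24` and
`L = (Q/12) ∂_P + (R/3) ∂_Q + (Q²/2) ∂_R`. The operator `E` is diagonal on
monomials, scaling `P^a Q^b R^c` by `a/12 + b/3 + c/2 - 1/24`, which is never zero because
24 times it is the odd integer `2a + 8b + 12c - 1`; so `E f` has the same support and depth as `f`.
The coefficients of `L` do not involve `P`, so `L` does not raise the depth. Hence the depth of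
`D̂ f` is that of `P · E f`, one more than the depth of `f`.
-/

namespace MvPolynomial

variable {σ R : Type*} [CommSemiring R]

theorem coeff_X_mul_pderiv (i : σ) (f : MvPolynomial σ R) (d : σ →₀ ℕ) :
    coeff d (X i * pderiv i f) = d i * coeff d f := by
  classical
  rw [coeff_X_mul']
  split_ifs with hi
  · have hi : 1 ≤ d i := Nat.one_le_iff_ne_zero.mpr (Finsupp.mem_support_iff.mp hi)
    rw [coeff_pderiv, tsub_add_cancel_of_le (Finsupp.single_le_iff.mpr hi), Finsupp.tsub_apply,
      Finsupp.single_eq_same, ← Nat.cast_add_one, Nat.sub_add_cancel hi, mul_comm]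
  · rw [Finsupp.notMem_support_iff.mp hi, Nat.cast_zero, zero_mul]

theorem degreeOf_pderiv_le (i j : σ) (f : MvPolynomial σ R) :
    degreeOf i (pderiv j f) ≤ degreeOf i f := by
  rw [degreeOf_le_iff]
  intro m hm
  have hmem : m + Finsupp.single j 1 ∈ f.support := by
    rw [mem_support_iff, coeff_pderiv] at hm
    exact mem_support_iff.mpr (left_ne_zero_of_mul hm)
  exact (Nat.le_add_right _ _).trans (le_degreeOf_of_mem_support i hmem)

theorem degreeOf_mul_pderiv_le {i : σ} {g : MvPolynomial σ R} (hg : degreeOf i g = 0) (j : σ)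
    (f : MvPolynomial σ R) : degreeOf i (g * pderiv j f) ≤ degreeOf i f :=
  (degreeOf_mul_le i g _).trans (by rw [hg, zero_add]; exact degreeOf_pderiv_le i j f)

theorem degreeOf_eq_of_support_eq {f g : MvPolynomial σ R} (h : g.support = f.support) (i : σ) :
    degreeOf i g = degreeOf i f := by
  rw [degreeOf_eq_sup, degreeOf_eq_sup, h]

end MvPolynomial

noncomputable def eulerDeriv : Derivation ℚ QM QM :=
  (C (1 / 12) * X 0 : QM) • pderiv 0 + (C (1 / 3) * X 1 : QM) • pderiv 1 +
    (C (1 / 2) * X 2 : QM) • pderiv 2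

noncomputable def lowerDeriv : Derivation ℚ QM QM :=
  (C (1 / 12) * X 1 : QM) • pderiv 0 + (C (1 / 3) * X 2 : QM) • pderiv 1 +
    (C (1 / 2) * X 1 ^ 2 : QM) • pderiv 2

theorem Dop_eq : Dop = (X 0 : QM) • eulerDeriv - lowerDeriv := by
  refine derivation_ext fun i => ?_
  fin_cases i <;> simp [Dop, eulerDeriv, lowerDeriv, smul_eq_C_mul] <;> ring

def depthWeight (d : Fin 3 →₀ ℕ) : ℚ := d 0 / 12 + d 1 / 3 + d 2 / 2 - 1 / 24

theorem depthWeight_ne_zero (d : Fin 3 →₀ ℕ) : depthWeight d ≠ 0 := by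
  intro h
  rw [depthWeight] at h
  have hcast : ((2 * d 0 + 8 * d 1 + 12 * d 2 : ℕ) : ℚ) = (1 : ℕ) := by push_cast; linarith
  have hodd : 2 * d 0 + 8 * d 1 + 12 * d 2 = 1 := by exact_mod_cast hcast
  omega

noncomputable def leadingPart (f : QM) : QM := eulerDeriv f - (1 / 24 : ℚ) • f

theorem coeff_leadingPart (d : Fin 3 →₀ ℕ) (f : QM) :
    coeff d (leadingPart f) = depthWeight d * coeff d f := by
  simp only [leadingPart, eulerDeriv, Derivation.coe_add, Derivation.coe_smul, Pi.add_apply,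
    Pi.smul_apply, smul_eq_mul, mul_assoc, coeff_sub, coeff_add, coeff_C_mul, coeff_X_mul_pderiv,
    coeff_smul, depthWeight]
  ring

theorem support_leadingPart (f : QM) : (leadingPart f).support = f.support := by
  ext d
  simp [mem_support_iff, coeff_leadingPart, depthWeight_ne_zero]

theorem Dhat_eq (f : QM) : Dhat f = X 0 * leadingPart f - lowerDeriv f := by
  rw [Dhat, Dop_eq, leadingPart]
  simp only [Derivation.sub_apply, Derivation.smul_apply, smul_eq_mul, mul_sub, mul_smul_comm]
  ring

theorem degreeOf_lowerDeriv_le (f : QM) : degreeOf 0 (lowerDeriv f) ≤ degreeOf 0 f := by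
  simp only [lowerDeriv, Derivation.add_apply, Derivation.smul_apply, smul_eq_mul]
  refine (degreeOf_add_le _ _ _).trans (max_le ((degreeOf_add_le _ _ _).trans (max_le ?_ ?_)) ?_) <;>
    refine degreeOf_mul_pderiv_le ?_ _ f <;>
    simp [degreeOf_C_mul, degreeOf_X_of_ne, degreeOf_X_pow_of_ne]

theorem coeff_lowerDeriv_of_degreeOf_lt {f : QM} {d : Fin 3 →₀ ℕ} (h : degreeOf 0 f < d 0) :
    coeff d (lowerDeriv f) = 0 :=
  notMem_support_iff.mp <| notMem_support_of_degreeOf_lt 0 <|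
    (degreeOf_lowerDeriv_le f).trans_lt h

theorem degreeOf_Dhat {f : QM} (hf : f ≠ 0) : degreeOf 0 (Dhat f) = degreeOf 0 f + 1 := by
  have hlead : leadingPart f ≠ 0 := by
    rwa [ne_eq, ← support_eq_empty, support_leadingPart, support_eq_empty]
  have hmul : degreeOf 0 (X 0 * leadingPart f) = degreeOf 0 f + 1 := by
    rw [mul_comm, (degreeOf_mul_X_eq_degreeOf_add_one_iff 0 _).mpr hlead,
      degreeOf_eq_of_support_eq (support_leadingPart f)]
  have hlow : degreeOf 0 (-lowerDeriv f) < degreeOf 0 (X 0 * leadingPart f) := by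
    rw [degreeOf_neg, hmul]
    exact Nat.lt_succ_of_le (degreeOf_lowerDeriv_le f)
  rw [Dhat_eq, sub_eq_add_neg, degreeOf_add_eq_of_degreeOf_lt hlow, hmul]

theorem coeff_Dhat_of_degreeOf_le {f : QM} {d : Fin 3 →₀ ℕ} (h : degreeOf 0 f ≤ d 0) :
    coeff (d + Finsupp.single 0 1) (Dhat f) = depthWeight d * coeff d f := by
  rw [Dhat_eq, coeff_sub, mul_comm, coeff_mul_X, coeff_leadingPart,
    coeff_lowerDeriv_of_degreeOf_lt (by simpa using Nat.lt_succ_of_le h), sub_zero]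

theorem coeff_Dhat_monomial (d : Fin 3 →₀ ℕ) :
    coeff (d + Finsupp.single 0 1) (Dhat (monomial d 1)) = depthWeight d := by
  rw [coeff_Dhat_of_degreeOf_le (degreeOf_monomial_eq d 0 one_ne_zero).le, coeff_monomial,
    if_pos rfl, mul_one]

theorem stmt_14 :
    (∀ a b c : ℕ,
      coeff (Finsupp.single 0 (a + 1) + Finsupp.single 1 b + Finsupp.single 2 c)
          (Dhat (X 0 ^ a * X 1 ^ b * X 2 ^ c)) =
        (a : ℚ) / 12 + (b : ℚ) / 3 + (c : ℚ) / 2 - 1 / 24)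
    ∧ (∀ a b c : ℕ,
      coeff (Finsupp.single 0 (a + 1) + Finsupp.single 1 b + Finsupp.single 2 c)
          (Dhat (X 0 ^ a * X 1 ^ b * X 2 ^ c)) ≠ 0)
    ∧ (∀ f : QM, ∀ r : ℕ, f ≠ 0 → degreeOf 0 f = r → degreeOf 0 (Dhat f) = r + 1) := by
  have hcoeff (a b c : ℕ) :
      coeff (Finsupp.single 0 (a + 1) + Finsupp.single 1 b + Finsupp.single 2 c)
          (Dhat (X 0 ^ a * X 1 ^ b * X 2 ^ c)) =
        depthWeight (Finsupp.single 0 a + Finsupp.single 1 b + Finsupp.single 2 c) := by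
    have hmono : (X 0 ^ a * X 1 ^ b * X 2 ^ c : QM) =
        monomial (Finsupp.single 0 a + Finsupp.single 1 b + Finsupp.single 2 c) 1 := by
      simp only [X_pow_eq_monomial, monomial_mul, mul_one]
    have hexp : Finsupp.single (0 : Fin 3) (a + 1) + Finsupp.single 1 b + Finsupp.single 2 c =
        Finsupp.single 0 a + Finsupp.single 1 b + Finsupp.single 2 c + Finsupp.single 0 1 := by
      ext i; fin_cases i <;> simp
    rw [hmono, hexp, coeff_Dhat_monomial]
  refine ⟨fun a b c => ?_, fun a b c => hcoeff a b c ▸ depthWeight_ne_zero _,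
    fun f r hf hr => hr ▸ degreeOf_Dhat hf⟩
  rw [hcoeff, depthWeight]
  simp
end

section
/- Define on R = Q[Q_1, Q_2, Q_3, ...] (with Q_0 := 1) the operators 𝒟_n = Σ_{i⃗ ∈ Z_{≥0}^n} multinomial(|i⃗|; i_1,...,i_n) Q_{|i⃗|} ∂^n/(∂Q_{i_1+1}···∂Q_{i_n+1}) for n ≥ 1, and 𝒟_0 = 1. Then the operators 𝒟_n and 𝒟_m commute for all n, m ≥ 0: [𝒟_n, 𝒟_m] = 0. -/
open MvPolynomial

/-- The operator `𝒟_n = Σ_{i⃗ ∈ ℤ_{≥0}ⁿ} multinomial(|i⃗|; i₁,…,iₙ) Q_{|i⃗|}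
∂ⁿ/(∂Q_{i₁+1} ⋯ ∂Q_{iₙ+1})`, with `Q₀ := 1`.  In particular `𝒟₀ = 1` and `𝒟₁ = ∂`. -/
noncomputable def Dn (n : ℕ) (f : BO) : BO :=
  ∑ᶠ iv : Fin n → ℕ,
    (Nat.multinomial Finset.univ iv : ℚ) •
      (Qv (∑ j, iv j) * (List.ofFn fun j => v (iv j)).foldr (fun k p => pderiv k p) f)

/-- The operator `Δ_n = Σ_{i=0}^n (-1)^i C(n,i) 𝒟_{n-i} ∂^i`, with `∂ = 𝒟₁`. -/
noncomputable def DelN (n : ℕ) (f : BO) : BO :=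
  ∑ i ∈ Finset.range (n + 1),
    ((-1 : ℚ) ^ i * (Nat.choose n i : ℚ)) • Dn (n - i) ((Dn 1)^[i] f)

/-! Encode constant-coefficient differential operators by their symbols, polynomials in the
commuting derivations `∂/∂Q_k`, and put `ξ(z) = ∑ᵢ zⁱ/i! ∂/∂Q_{i+1}`. Then
`𝒟_n = ∑_k Q_k s_{n,k}` with `s_{n,k} = k! [zᵏ] ξⁿ`. Moving the derivatives of `𝒟_n` past the
coefficients `Q_l` of `𝒟_m` gives
`𝒟_n 𝒟_m = ∑_{k,l} Q_k Q_l s_{n,k} s_{m,l} + ∑_k Q_k δ_m(s_{n,k})`,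
where `δ_m` is the derivation of the symbol ring with `δ_m(∂/∂Q_l) = s_{m,l}`. The first sum is
symmetric in `n, m`. Applied coefficientwise, `δ_m ξ = d(ξᵐ)/dz`, hence
`δ_m(ξⁿ) = n m ξⁿ⁻¹ ξᵐ⁻¹ dξ/dz`, which is symmetric as well. -/

open Finset PowerSeries Filter
open scoped Nat

section DiffOp

variable {σ R : Type*} [CommSemiring R]

lemma pderiv_pderiv_comm (i j : σ) (f : MvPolynomial σ R) :
    pderiv i (pderiv j f) = pderiv j (pderiv i f) := by
  classical
  induction f using MvPolynomial.induction_on with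
  | C a => simp
  | add p q hp hq => simp [hp, hq]
  | mul_X p k hp =>
    simp only [Derivation.leibniz, pderiv_X, map_add, Pi.single_apply]
    split_ifs <;> simp_all [smul_eq_mul] <;> ring

/-- The differential operator with constant coefficients and symbol `s`: the partial derivatives
commute, so `X k ↦ ∂/∂X k` extends to an algebra map. -/
noncomputable def diffOp : MvPolynomial σ R →ₐ[R] Module.End R (MvPolynomial σ R) :=
  let D := Algebra.adjoin R
    (Set.range fun k : σ => ((pderiv k).toLinearMap : Module.End R (MvPolynomial σ R)))
  haveI : IsMulCommutative D := Algebra.isMulCommutative_adjoin R <| by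
    rintro _ ⟨i, rfl⟩ _ ⟨j, rfl⟩
    exact LinearMap.ext fun f => pderiv_pderiv_comm i j f
  open scoped IsMulCommutative in
  D.val.comp (aeval (S₁ := D) fun k => ⟨_, Algebra.subset_adjoin ⟨k, rfl⟩⟩)

@[simp] lemma diffOp_X (k : σ) (f : MvPolynomial σ R) : diffOp (X k) f = pderiv k f := by
  simp [diffOp]

lemma pderiv_diffOp (k : σ) (s g : MvPolynomial σ R) :
    pderiv k (diffOp s g) = diffOp s (pderiv k g) := by
  rw [← diffOp_X, ← Module.End.mul_apply, ← map_mul, mul_comm, map_mul, Module.End.mul_apply,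
    diffOp_X]

lemma diffOp_X_mul (s : MvPolynomial σ R) (j : σ) (g : MvPolynomial σ R) :
    diffOp s (X j * g) = X j * diffOp s g + diffOp (pderiv j s) g := by
  classical
  induction s using MvPolynomial.induction_on generalizing g with
  | C a => simp [← MvPolynomial.algebraMap_eq, Module.algebraMap_end_apply]
  | add p q hp hq => simp only [map_add, LinearMap.add_apply, hp, hq]; ring
  | mul_X p k hp =>
    simp only [map_mul, Module.End.mul_apply, diffOp_X, Derivation.leibniz, pderiv_X, smul_eq_mul,
      map_add, hp, LinearMap.add_apply, Pi.single_apply, pderiv_diffOp]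
    rcases eq_or_ne k j with rfl | h
    · simp only [if_true, mul_one, map_one, Module.End.one_apply]; abel
    · simp [h, h.symm]

lemma foldr_pderiv_ofFn {n : ℕ} (w : Fin n → σ) (f : MvPolynomial σ R) :
    (List.ofFn w).foldr (fun k p => pderiv k p) f = diffOp (∏ j, X (w j)) f := by
  induction n with
  | zero => simp
  | succ n ih => simp [List.ofFn_succ, Fin.prod_univ_succ, ih]

def diffOpAnn (f : MvPolynomial σ R) : Ideal (MvPolynomial σ R) where
  carrier := {s | diffOp s f = 0}
  add_mem' hs ht := by simp_all
  zero_mem' := by simp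
  smul_mem' c s hs := by simp_all

lemma mem_diffOpAnn {f s : MvPolynomial σ R} : s ∈ diffOpAnn f ↔ diffOp s f = 0 := Iff.rfl

lemma X_mem_diffOpAnn {f : MvPolynomial σ R} {k : σ} (hk : k ∉ f.vars) : X k ∈ diffOpAnn f := by
  simpa [mem_diffOpAnn] using pderiv_eq_zero_of_notMem_vars hk

lemma derivation_mem_of_forall_X_mem {I : Ideal (MvPolynomial σ R)}
    (D : Derivation R (MvPolynomial σ R) (MvPolynomial σ R)) (h : ∀ j, D (MvPolynomial.X j) ∈ I)
    (s : MvPolynomial σ R) : D s ∈ I := by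
  induction s using MvPolynomial.induction_on with
  | C a => simp [derivation_C]
  | add p q hp hq => rw [map_add]; exact add_mem hp hq
  | mul_X p j hp =>
    rw [Derivation.leibniz, smul_eq_mul, smul_eq_mul]
    exact add_mem (I.mul_mem_left _ (h j)) (I.mul_mem_left _ hp)

end DiffOp

section PowerSeries

variable {R A : Type*} [CommSemiring R] [CommSemiring A] [Algebra R A]

noncomputable def Derivation.powerSeriesMap (d : Derivation R A A) :
    Derivation R (PowerSeries A) (PowerSeries A) where
  toFun F := PowerSeries.mk fun k => d (coeff k F)
  map_add' F G := by ext; simp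
  map_smul' r F := by ext; simp
  map_one_eq_zero' := by
    ext k
    simp only [LinearMap.coe_mk, AddHom.coe_mk, coeff_mk, PowerSeries.coeff_one, map_zero]
    split_ifs <;> simp
  leibniz' F G := by
    ext k
    simp only [LinearMap.coe_mk, AddHom.coe_mk, smul_eq_mul, map_add]
    rw [mul_comm G, PowerSeries.coeff_mul, PowerSeries.coeff_mul, coeff_mk, PowerSeries.coeff_mul,
      map_sum, ← sum_add_distrib]
    simp only [coeff_mk, Derivation.leibniz, smul_eq_mul, mul_comm]

lemma Derivation.coeff_powerSeriesMap (d : Derivation R A A) (F : PowerSeries A) (k : ℕ) :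
    coeff k (d.powerSeriesMap F) = d (coeff k F) :=
  coeff_mk k fun k => d (coeff k F)

lemma coeff_pow_eq_sum_antidiagonalTuple (F : PowerSeries A) (n k : ℕ) :
    coeff k (F ^ n) = ∑ i ∈ Nat.antidiagonalTuple n k, ∏ j, coeff (i j) F := by
  classical
  rw [show F ^ n = ∏ _j : Fin n, F by simp, coeff_prod]
  exact sum_equiv Finsupp.equivFunOnFinite (by simp [Nat.mem_antidiagonalTuple]) (by simp)

end PowerSeries

/-- `∂/∂Q_l`; it vanishes for `l = 0` because `Qv 0 = 1`. -/
noncomputable def qDeriv (l : ℕ) : Derivation ℚ (MvPolynomial ℕ+ ℚ) (MvPolynomial ℕ+ ℚ) :=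
  if h : 0 < l then pderiv (l.toPNat h) else 0

lemma qDeriv_X (l : ℕ) (j : ℕ+) : qDeriv l (X j) = if (j : ℕ) = l then 1 else 0 := by
  by_cases hl : 0 < l
  · rw [qDeriv, dif_pos hl, pderiv_X, Pi.single_apply]
    simp only [← PNat.coe_inj]
    rfl
  · have hj : (j : ℕ) ≠ l := fun h => hl (h ▸ j.pos)
    simp [qDeriv, hl, hj]

lemma diffOp_Qv_mul (s : MvPolynomial ℕ+ ℚ) (l : ℕ) (g : BO) :
    diffOp s (Qv l * g) = Qv l * diffOp s g + diffOp (qDeriv l s) g := by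
  unfold Qv qDeriv
  split_ifs
  · exact diffOp_X_mul s _ g
  · simp

lemma diffOp_sum_Qv_mul (s : MvPolynomial ℕ+ ℚ) (N : ℕ) (t : ℕ → MvPolynomial ℕ+ ℚ) (f : BO) :
    diffOp s (∑ l ∈ range N, Qv l * diffOp (t l) f) =
      ∑ l ∈ range N, Qv l * diffOp (s * t l) f +
        diffOp (∑ l ∈ range N, qDeriv l s * t l) f := by
  simp only [map_sum, diffOp_Qv_mul, map_mul, Module.End.mul_apply, sum_add_distrib,
    LinearMap.sum_apply]

lemma mkDerivation_sub_sum_qDeriv_mem_diffOpAnn {f : BO} {N : ℕ} {t : ℕ → MvPolynomial ℕ+ ℚ}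
    (ht : ∀ l, N ≤ l → t l ∈ diffOpAnn f) (s : MvPolynomial ℕ+ ℚ) :
    mkDerivation ℚ (fun j : ℕ+ => t j) s - ∑ l ∈ range N, qDeriv l s * t l ∈ diffOpAnn f := by
  let D := mkDerivation ℚ (fun j : ℕ+ => t j) - ∑ l ∈ range N, t l • qDeriv l
  have hD : ∀ s, D s =
      mkDerivation ℚ (fun j : ℕ+ => t j) s - ∑ l ∈ range N, qDeriv l s * t l := by
    intro s
    rw [Derivation.sub_apply, ← Derivation.coeFnAddMonoidHom_apply (∑ l ∈ range N, _), map_sum,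
      Finset.sum_apply]
    simp [mul_comm]
  rw [← hD]
  refine derivation_mem_of_forall_X_mem D (fun j => ?_) s
  rw [hD]
  simp only [mkDerivation_X, qDeriv_X, ite_mul, one_mul, zero_mul, sum_ite_eq, mem_range]
  split_ifs with h
  · simp
  · rw [sub_zero]
    exact ht _ (not_lt.1 h)

noncomputable def derivSeries : PowerSeries (MvPolynomial ℕ+ ℚ) :=
  PowerSeries.mk fun i => (i ! : ℚ)⁻¹ • X (v i)

lemma coeff_derivSeries (i : ℕ) : coeff i derivSeries = (i ! : ℚ)⁻¹ • X (v i) :=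
  coeff_mk _ _

/-- The symbol of the part of `𝒟_n` with `|i⃗| = k`. -/
noncomputable def symbol (n k : ℕ) : MvPolynomial ℕ+ ℚ :=
  ∑ i ∈ Nat.antidiagonalTuple n k, (Nat.multinomial univ i : ℚ) • ∏ j, X (v (i j))

lemma symbol_eq_smul_coeff (n k : ℕ) : symbol n k = (k ! : ℚ) • coeff k (derivSeries ^ n) := by
  rw [coeff_pow_eq_sum_antidiagonalTuple, smul_sum, symbol]
  refine sum_congr rfl fun i hi => ?_
  rw [Nat.mem_antidiagonalTuple] at hi
  simp only [coeff_derivSeries, prod_smul, smul_smul]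
  congr 1
  rw [← hi, ← Nat.multinomial_spec univ i, Nat.cast_mul, Nat.cast_prod, prod_inv_distrib]
  field_simp

lemma eventually_prod_X_mem_diffOpAnn (n : ℕ) (f : BO) :
    ∀ᶠ k in atTop, ∀ i : Fin n → ℕ, ∑ j, i j = k → ∏ j, X (v (i j)) ∈ diffOpAnn f := by
  obtain ⟨M, hM⟩ : ∃ M, ∀ x ∈ f.vars, (x : ℕ) ≤ M := ⟨_, fun x hx => le_sup (f := PNat.val) hx⟩
  refine eventually_atTop.2 ⟨n * M + 1, fun k hk i hi => ?_⟩
  obtain ⟨j, hj⟩ : ∃ j, M ≤ i j := by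
    by_contra! h
    have : ∑ j, i j ≤ n * M := by
      simpa using sum_le_sum fun j (_ : j ∈ univ) => (h j).le
    omega
  have hX : X (v (i j)) ∈ diffOpAnn f :=
    X_mem_diffOpAnn fun hmem => by have := hM _ hmem; simp [v] at this; omega
  exact Ideal.mem_of_dvd _ (dvd_prod_of_mem _ (mem_univ j)) hX

lemma eventually_symbol_mem_diffOpAnn (n : ℕ) (f : BO) :
    ∀ᶠ k in atTop, symbol n k ∈ diffOpAnn f :=
  (eventually_prod_X_mem_diffOpAnn n f).mono fun _ hk =>
    sum_mem fun i hi => Submodule.smul_of_tower_mem _ _ (hk i (Nat.mem_antidiagonalTuple.1 hi))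

lemma eventually_Dn_eq_sum_range (n : ℕ) (f : BO) :
    ∀ᶠ N in atTop, Dn n f = ∑ k ∈ range N, Qv k * diffOp (symbol n k) f := by
  filter_upwards [eventually_forall_ge_atTop.2 (eventually_prod_X_mem_diffOpAnn n f)] with N hN
  simp only [Dn, foldr_pderiv_ofFn]
  rw [finsum_eq_sum_of_support_subset (s := (range N).biUnion (Nat.antidiagonalTuple n)),
    sum_biUnion]
  · refine sum_congr rfl fun k _ => ?_
    simp only [symbol, map_sum, LinearMap.sum_apply, mul_sum]
    refine sum_congr rfl fun i hi => ?_
    rw [Nat.mem_antidiagonalTuple.1 hi, map_smul, LinearMap.smul_apply, mul_smul_comm]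
  · intro k _ l _ hkl
    exact disjoint_left.2 fun i hk hl =>
      hkl ((Nat.mem_antidiagonalTuple.1 hk).symm.trans (Nat.mem_antidiagonalTuple.1 hl))
  · intro i hi
    simp only [coe_biUnion, coe_range, Set.mem_iUnion, Set.mem_Iio, mem_coe,
      Nat.mem_antidiagonalTuple, exists_prop, exists_eq_right']
    by_contra! h
    exact hi (by simp only [mem_diffOpAnn.1 (hN _ h i rfl), mul_zero, smul_zero])

noncomputable def crossDeriv (m : ℕ) : Derivation ℚ (MvPolynomial ℕ+ ℚ) (MvPolynomial ℕ+ ℚ) :=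
  mkDerivation ℚ fun j : ℕ+ => symbol m j

lemma powerSeriesMap_crossDeriv_derivSeries (m : ℕ) :
    (crossDeriv m).powerSeriesMap derivSeries = d⁄dX _ (derivSeries ^ m) := by
  refine PowerSeries.ext fun i => ?_
  rw [Derivation.coeff_powerSeriesMap, coeff_derivative, coeff_derivSeries, Derivation.map_smul,
    crossDeriv, mkDerivation_X, show ((v i : ℕ+) : ℕ) = i + 1 from rfl, symbol_eq_smul_coeff,
    smul_smul, Nat.factorial_succ, Nat.cast_mul, mul_comm _ (i ! : ℚ),
    inv_mul_cancel_left₀ (by positivity), Nat.cast_smul_eq_nsmul, nsmul_eq_mul, mul_comm]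
  push_cast
  rfl

lemma crossDeriv_symbol_comm (n m k : ℕ) :
    crossDeriv m (symbol n k) = crossDeriv n (symbol m k) := by
  have key : ∀ n m : ℕ, (crossDeriv m).powerSeriesMap (derivSeries ^ n) =
      (n * m : PowerSeries (MvPolynomial ℕ+ ℚ)) * derivSeries ^ (n - 1) * derivSeries ^ (m - 1) *
        d⁄dX _ derivSeries := by
    intro n m
    rw [Derivation.leibniz_pow, powerSeriesMap_crossDeriv_derivSeries, derivative_pow]
    simp only [nsmul_eq_mul, smul_eq_mul]
    ring
  rw [symbol_eq_smul_coeff, symbol_eq_smul_coeff, Derivation.map_smul, Derivation.map_smul,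
    ← Derivation.coeff_powerSeriesMap, ← Derivation.coeff_powerSeriesMap, key, key]
  ring_nf

lemma eventually_Dn_Dn_eq (n m : ℕ) (f : BO) :
    ∀ᶠ N in atTop, Dn n (Dn m f) =
      ∑ k ∈ range N, ∑ l ∈ range N, Qv k * (Qv l * diffOp (symbol n k * symbol m l) f) +
        ∑ k ∈ range N, Qv k * diffOp (crossDeriv m (symbol n k)) f := by
  filter_upwards [eventually_Dn_eq_sum_range m f, eventually_Dn_eq_sum_range n (Dn m f),
    eventually_forall_ge_atTop.2 (eventually_symbol_mem_diffOpAnn m f)] with N hm hn hann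
  rw [hn, hm, ← sum_add_distrib]
  refine sum_congr rfl fun k _ => ?_
  have hcross := mem_diffOpAnn.1 (mkDerivation_sub_sum_qDeriv_mem_diffOpAnn hann (symbol n k))
  rw [map_sub, LinearMap.sub_apply, sub_eq_zero] at hcross
  rw [diffOp_sum_Qv_mul, mul_add, mul_sum, crossDeriv, hcross]

theorem stmt_15 (n m : ℕ) (f : BO) : Dn n (Dn m f) = Dn m (Dn n f) := by
  obtain ⟨N, hnm, hmn⟩ := ((eventually_Dn_Dn_eq n m f).and (eventually_Dn_Dn_eq m n f)).exists
  rw [hnm, hmn]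
  simp_rw [crossDeriv_symbol_comm n m]
  congr 1
  rw [sum_comm]
  exact sum_congr rfl fun l _ => sum_congr rfl fun k _ => by
    rw [mul_left_comm, mul_comm (symbol n k)]
end

section
/- With 𝒟_n as above and ∂ = 𝒟_1, define Δ_n = Σ_{i=0}^n (-1)^i C(n,i) 𝒟_{n-i} ∂^i. Then for every n ≥ 0, Δ_n commutes with multiplication by Q_1: Δ_n(Q_1 f) = Q_1 Δ_n(f) for all f ∈ R. -/
/-!
Both `𝒟_m` and `∂ = 𝒟₁` satisfy `[𝒟_m, Q₁] = m 𝒟_{m-1}`: by the Leibniz rule, moving `Q₁` out of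
`∂ⁿ/(∂Q_{i₁+1} ⋯ ∂Q_{iₙ+1})` costs one term for each `j` with `i_j = 0`, and deleting that zero
entry changes neither the multinomial coefficient nor `|i⃗|`. Iterating, `[∂^i, Q₁] = i ∂^{i-1}`,
so `[Δ_n, Q₁] = Σ_i (-1)^i C(n,i) ((n-i) 𝒟_{n-i-1} ∂^i + i 𝒟_{n-i} ∂^{i-1})`, which telescopes to
zero because `(i+1) C(n,i+1) = (n-i) C(n,i)`.
-/

open MvPolynomial

theorem List.eraseIdx_ofFn {α : Type*} {m : ℕ} (g : Fin (m + 1) → α) (j : Fin (m + 1)) :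
    (List.ofFn g).eraseIdx j = List.ofFn (g ∘ j.succAbove) := by
  refine List.ext_getElem (by simp [List.length_eraseIdx]; omega) fun i h₁ h₂ => ?_
  simp only [List.getElem_eraseIdx, List.getElem_ofFn, Function.comp_apply, Fin.succAbove,
    Fin.lt_def, Fin.val_castSucc]
  split_ifs <;> rfl

namespace MvPolynomial

variable {σ R : Type*} [CommSemiring R]

theorem vars_pderiv_subset (i : σ) (f : MvPolynomial σ R) : (pderiv i f).vars ⊆ f.vars := by
  classical
  intro k hk
  obtain ⟨m, hm, hkm⟩ := (mem_vars_iff_mem_support k).1 hk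
  rw [mem_support_iff, coeff_pderiv] at hm
  refine (mem_vars_iff_mem_support k).2
    ⟨m + Finsupp.single i 1, mem_support_iff.2 (left_ne_zero_of_mul hm), ?_⟩
  simp only [Finsupp.mem_support_iff, Finsupp.add_apply] at hkm ⊢
  omega

noncomputable def pderivList (L : List σ) (f : MvPolynomial σ R) : MvPolynomial σ R :=
  L.foldr (fun k p => pderiv k p) f

@[simp] theorem pderivList_nil (f : MvPolynomial σ R) : pderivList [] f = f := rfl

@[simp] theorem pderivList_cons (k : σ) (L : List σ) (f : MvPolynomial σ R) :
    pderivList (k :: L) f = pderiv k (pderivList L f) := rfl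

theorem pderivList_add (L : List σ) (f g : MvPolynomial σ R) :
    pderivList L (f + g) = pderivList L f + pderivList L g := by
  induction L with
  | nil => rfl
  | cons k L ih => simp [ih]

theorem pderivList_smul (L : List σ) (c : R) (f : MvPolynomial σ R) :
    pderivList L (c • f) = c • pderivList L f := by
  induction L with
  | nil => rfl
  | cons k L ih => simp [ih]

theorem vars_pderivList_subset (L : List σ) (f : MvPolynomial σ R) :
    (pderivList L f).vars ⊆ f.vars := by
  induction L with
  | nil => exact subset_rfl
  | cons k L ih => exact (vars_pderiv_subset k _).trans ih

theorem mem_vars_of_pderivList_ne_zero {L : List σ} {f : MvPolynomial σ R}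
    (h : pderivList L f ≠ 0) {k : σ} (hk : k ∈ L) : k ∈ f.vars := by
  induction L with
  | nil => simp at hk
  | cons k' L ih =>
    rw [pderivList_cons] at h
    rcases List.mem_cons.1 hk with rfl | hk
    · by_contra hkf
      exact h (pderiv_eq_zero_of_notMem_vars fun hk' => hkf (vars_pderivList_subset L f hk'))
    · exact ih (fun h0 => h (by rw [h0, map_zero])) hk

theorem pderivList_X_mul [DecidableEq σ] (a : σ) (L : List σ) (f : MvPolynomial σ R) :
    pderivList L (X a * f) = X a * pderivList L f +
      ∑ j : Fin L.length, if L[j] = a then pderivList (L.eraseIdx j) f else 0 := by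
  induction L with
  | nil => simp
  | cons k L ih =>
    rw [pderivList_cons, ih, map_add, map_sum, pderiv_mul]
    erw [Fin.sum_univ_succ]
    simp only [apply_ite (pderiv k), map_zero]
    by_cases hka : k = a
    · subst hka
      simp only [pderiv_X_self, one_mul, Fin.getElem_fin, pderivList_cons, Fin.val_zero,
        List.getElem_cons_zero, if_pos, List.eraseIdx_zero, List.tail_cons, Fin.val_succ,
        List.getElem_cons_succ, List.eraseIdx_cons_succ]
      abel
    · simp [pderiv_X_of_ne (Ne.symm hka), hka]

theorem pderivList_ofFn_X_mul [DecidableEq σ] (a : σ) {m : ℕ} (g : Fin (m + 1) → σ)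
    (f : MvPolynomial σ R) :
    pderivList (List.ofFn g) (X a * f) = X a * pderivList (List.ofFn g) f +
      ∑ j, if g j = a then pderivList (List.ofFn (g ∘ j.succAbove)) f else 0 := by
  rw [pderivList_X_mul, ← Fin.sum_congr' _ (List.length_ofFn).symm]
  simp only [Fin.getElem_fin, Fin.val_cast, List.getElem_ofFn, List.eraseIdx_ofFn]

end MvPolynomial

theorem finsum_ite_removeNth {α M : Type*} [DecidableEq α] [AddCommMonoid M] {m : ℕ}
    (j : Fin (m + 1)) (a : α) (g : (Fin m → α) → M) :
    ∑ᶠ x : Fin (m + 1) → α, (if x j = a then g (j.removeNth x) else 0) = ∑ᶠ y, g y := by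
  have hbij : Set.BijOn (j.insertNth a) Set.univ {x : Fin (m + 1) → α | x j = a} :=
    ⟨fun y _ => by simp,
      fun y _ y' _ h => by simpa using congrArg j.removeNth h,
      fun x hx => ⟨j.removeNth x, trivial, by rw [← hx, Fin.insertNth_self_removeNth]⟩⟩
  rw [← finsum_mem_univ g, finsum_mem_eq_of_bijOn _ hbij
    (g := fun x => g (j.removeNth x)) (fun y _ => by rw [Fin.removeNth_insertNth]), finsum_mem_def]
  exact finsum_congr fun x => by simp [Set.indicator_apply]

theorem Function.HasFiniteSupport.ite_removeNth {α M : Type*} [DecidableEq α] [AddCommMonoid M]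
    {m : ℕ} (j : Fin (m + 1)) (a : α) {g : (Fin m → α) → M} (hg : g.HasFiniteSupport) :
    Function.HasFiniteSupport fun x : Fin (m + 1) → α =>
      if x j = a then g (j.removeNth x) else 0 := by
  rw [Function.HasFiniteSupport] at hg ⊢
  refine (hg.image (j.insertNth a)).subset fun x hx => ?_
  by_cases hxj : x j = a
  · refine ⟨j.removeNth x, by simpa [hxj] using hx, ?_⟩
    rw [← hxj, Fin.insertNth_self_removeNth]
  · simp [hxj] at hx

theorem Nat.multinomial_removeNth {m : ℕ} (j : Fin (m + 1)) {f : Fin (m + 1) → ℕ} (hf : f j = 0) :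
    Nat.multinomial Finset.univ (j.removeNth f) = Nat.multinomial Finset.univ f := by
  simp only [Nat.multinomial, Fin.sum_univ_succAbove f j, Fin.prod_univ_succAbove _ j, hf,
    Fin.removeNth_apply, zero_add, Nat.factorial_zero, one_mul]

theorem Fin.sum_removeNth {M : Type*} [AddCommMonoid M] {m : ℕ} (j : Fin (m + 1))
    {f : Fin (m + 1) → M} (hf : f j = 0) : ∑ i, j.removeNth f i = ∑ i, f i := by
  rw [Fin.sum_univ_succAbove f j, hf, zero_add]
  rfl

theorem v_injective_s16 : Function.Injective v := fun a b h => by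
  simpa [v] using congrArg PNat.val h

noncomputable def DnTerm (n : ℕ) (f : BO) (iv : Fin n → ℕ) : BO :=
  (Nat.multinomial Finset.univ iv : ℚ) •
    (Qv (∑ j, iv j) * pderivList (List.ofFn fun j => v (iv j)) f)

theorem Dn_eq_finsum (n : ℕ) (f : BO) : Dn n f = ∑ᶠ iv, DnTerm n f iv := rfl

theorem hasFiniteSupport_DnTerm (n : ℕ) (f : BO) : (DnTerm n f).HasFiniteSupport := by
  have hfin : (Set.univ.pi fun _ : Fin n => v ⁻¹' f.vars).Finite :=
    Set.Finite.pi fun _ => (f.vars.finite_toSet).preimage v_injective_s16.injOn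
  refine hfin.subset fun iv hiv j _ => ?_
  have hD : pderivList (List.ofFn fun j => v (iv j)) f ≠ 0 := fun h0 => hiv (by simp [DnTerm, h0])
  exact mem_vars_of_pderivList_ne_zero hD (List.mem_ofFn.2 ⟨j, rfl⟩)

theorem Dn_zero (f : BO) : Dn 0 f = f := by
  simp [Dn_eq_finsum, DnTerm, Qv, Nat.multinomial, finsum_unique]

theorem Dn_add (n : ℕ) (f g : BO) : Dn n (f + g) = Dn n f + Dn n g := by
  rw [Dn_eq_finsum, Dn_eq_finsum, Dn_eq_finsum,
    ← finsum_add_distrib (hasFiniteSupport_DnTerm n f) (hasFiniteSupport_DnTerm n g)]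
  exact finsum_congr fun iv => by simp only [DnTerm, pderivList_add, mul_add, smul_add]

theorem Dn_smul (n : ℕ) (c : ℚ) (f : BO) : Dn n (c • f) = c • Dn n f := by
  simp only [Dn_eq_finsum, smul_finsum, DnTerm, pderivList_smul, mul_smul_comm, smul_comm c]

theorem DnTerm_X_mul (m : ℕ) (f : BO) (iv : Fin (m + 1) → ℕ) :
    DnTerm (m + 1) (X (v 0) * f) iv = X (v 0) * DnTerm (m + 1) f iv +
      ∑ j, if iv j = 0 then DnTerm m f (j.removeNth iv) else 0 := by
  rw [DnTerm, pderivList_ofFn_X_mul, mul_add, smul_add]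
  congr 1
  · rw [DnTerm, mul_left_comm, mul_smul_comm]
  rw [Finset.mul_sum, Finset.smul_sum]
  refine Finset.sum_congr rfl fun j _ => ?_
  simp only [v_injective_s16.eq_iff]
  split_ifs with hj
  · rw [DnTerm, Nat.multinomial_removeNth j hj, Fin.sum_removeNth j hj]
    rfl
  · rw [mul_zero, smul_zero]

theorem Dn_X_mul (m : ℕ) (f : BO) :
    Dn m (X (v 0) * f) = X (v 0) * Dn m f + (m : ℚ) • Dn (m - 1) f := by
  cases m with
  | zero => simp [Dn_zero]
  | succ m =>
    have hrem (j : Fin (m + 1)) := (hasFiniteSupport_DnTerm m f).ite_removeNth j 0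
    have hmul : Function.HasFiniteSupport fun iv => X (v 0) * DnTerm (m + 1) f iv :=
      Function.HasFiniteSupport.mul_right _ (hasFiniteSupport_DnTerm _ f)
    rw [Dn_eq_finsum, finsum_congr (DnTerm_X_mul m f),
      finsum_add_distrib hmul (Function.HasFiniteSupport.sum hrem _), ← mul_finsum,
      finsum_sum_comm _ _ fun j _ => hrem j]
    simp only [finsum_ite_removeNth, Finset.sum_const, Finset.card_univ, Fintype.card_fin,
      ← Nat.cast_smul_eq_nsmul ℚ, Nat.add_sub_cancel, Dn_eq_finsum]

theorem Dn_one_iterate_X_mul (i : ℕ) (f : BO) :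
    (Dn 1)^[i] (X (v 0) * f) = X (v 0) * (Dn 1)^[i] f + (i : ℚ) • (Dn 1)^[i - 1] f := by
  induction i with
  | zero => simp
  | succ k ih =>
    rw [Function.iterate_succ_apply', ih, Dn_add, Dn_smul, Dn_X_mul, Dn_zero,
      ← Function.iterate_succ_apply' (Dn 1), Nat.add_sub_cancel]
    cases k with
    | zero => simp
    | succ l =>
      rw [Nat.add_sub_cancel, ← Function.iterate_succ_apply' (Dn 1), Nat.cast_one, one_smul,
        add_assoc, Nat.cast_succ (l + 1), add_smul, one_smul, add_comm (_ • _)]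

theorem Dn_iterate_X_mul (m i : ℕ) (f : BO) :
    Dn m ((Dn 1)^[i] (X (v 0) * f)) = X (v 0) * Dn m ((Dn 1)^[i] f) +
      (m : ℚ) • Dn (m - 1) ((Dn 1)^[i] f) + (i : ℚ) • Dn m ((Dn 1)^[i - 1] f) := by
  rw [Dn_one_iterate_X_mul, Dn_add, Dn_X_mul, Dn_smul]

theorem Finset.sum_range_succ_add_sum_range_succ_eq_zero {M : Type*} [AddCommGroup M]
    {a b : ℕ → M} {n : ℕ} (ha : a n = 0) (hb₀ : b 0 = 0) (hb : ∀ k, b (k + 1) = -a k) :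
    ∑ i ∈ range (n + 1), a i + ∑ i ∈ range (n + 1), b i = 0 := by
  simp [sum_range_succ a, ha, sum_range_succ' b, hb₀, hb]

theorem stmt_16 (n : ℕ) (f : BO) :
    DelN n (X (v 0) * f) = X (v 0) * DelN n f := by
  set c : ℕ → ℚ := fun i => (-1) ^ i * (n.choose i : ℚ)
  set a : ℕ → BO := fun i => (c i * (n - i : ℕ)) • Dn (n - i - 1) ((Dn 1)^[i] f)
  set b : ℕ → BO := fun i => (c i * i) • Dn (n - i) ((Dn 1)^[i - 1] f)
  have hterm (i : ℕ) : c i • Dn (n - i) ((Dn 1)^[i] (X (v 0) * f)) =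
      X (v 0) * (c i • Dn (n - i) ((Dn 1)^[i] f)) + (a i + b i) := by
    rw [Dn_iterate_X_mul, smul_add, smul_add, mul_smul_comm, smul_smul, smul_smul, add_assoc]
  have hb (k : ℕ) : b (k + 1) = -a k := by
    have hc : c (k + 1) * (k + 1 : ℕ) = -(c k * (n - k : ℕ)) := by
      have h := congrArg (Nat.cast : ℕ → ℚ) (Nat.choose_succ_right_eq n k)
      push_cast at h ⊢
      linear_combination (-(-1 : ℚ) ^ k) * h
    simp only [a, b, Nat.add_sub_cancel, Nat.sub_sub, hc, neg_smul]
  rw [DelN, DelN, Finset.sum_congr rfl fun i _ => hterm i, Finset.sum_add_distrib,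
    ← Finset.mul_sum, Finset.sum_add_distrib,
    Finset.sum_range_succ_add_sum_range_succ_eq_zero (by simp [a]) (by simp [b]) hb, add_zero]
end
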